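/- Let D be an Egyptian integral domain with fraction field K, let L be a field extension of K, and let R be a ring with D ⊆ R ⊆ L. Suppose R is generated as a D-algebra by nonzero elements u₁, …, u_t, and set u = u₁ · u₂ ⋯ u_t. Then the localization R_u = R[1/u] is Egyptian. -/
import Mathlib


universe u

/-- A commutative ring `D` is *Egyptian* if every nonzero `d : D` is a sum of reciprocals
`d = 1/d₁ + ⋯ + 1/dₙ` of finitely many pairwise distinct nonzero elements `dᵢ` of `D`, the
equality holding in any field in which `D` embeds.  (For an integral domain `D` this is
equivalent to the usual definition, in which the equality is required in the fraction field
of `D`: such an equality holds in one field containing `D` iff it holds in all of them.) -/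
def IsEgyptian (D : Type u) [CommRing D] : Prop :=
  ∀ d : D, d ≠ 0 → ∃ s : Finset D, (∀ i ∈ s, i ≠ 0) ∧
    ∀ (K : Type u) [Field K] (φ : D →+* K), Function.Injective φ →
      φ d = ∑ i ∈ s, (φ i)⁻¹

/-- A domain `D` is *generically Egyptian* if `D[1/f]` is Egyptian for some nonzero `f : D`. -/
def IsGenericallyEgyptian (D : Type u) [CommRing D] : Prop :=
  ∃ f : D, f ≠ 0 ∧ IsEgyptian (Localization.Away f)

/-- A domain `D` is *locally Egyptian* if there is a finite set of generators of the unit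
ideal of `D` such that inverting any one of them yields an Egyptian ring. -/
def IsLocallyEgyptian (D : Type u) [CommRing D] : Prop :=
  ∃ s : Finset D, Ideal.span (s : Set D) = ⊤ ∧
    ∀ f ∈ s, IsEgyptian (Localization.Away f)

/-- Two elements of `L` differ by a nonzero factor from `Frac D`. -/
def EgyRel (D : Type*) [CommRing D] {L : Type*} [Field L] [Algebra D L] (x y : L) : Prop :=
  ∃ p : D × D, p.1 ≠ 0 ∧ p.2 ≠ 0 ∧ p.1 • x = p.2 • y

section EgyRelLemmas
variable {D : Type*} [CommRing D] [IsDomain D] {L : Type*} [Field L] [Algebra D L]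

theorem EgyRel.refl (x : L) : EgyRel D x x := ⟨(1, 1), one_ne_zero, one_ne_zero, rfl⟩

omit [IsDomain D] in
theorem EgyRel.symm {x y : L} (h : EgyRel D x y) : EgyRel D y x := by
  obtain ⟨⟨a, b⟩, ha, hb, hab⟩ := h
  exact ⟨(b, a), hb, ha, hab.symm⟩

theorem EgyRel.trans {x y z : L} (h1 : EgyRel D x y) (h2 : EgyRel D y z) : EgyRel D x z := by
  obtain ⟨⟨a, b⟩, ha, hb, hab⟩ := h1
  obtain ⟨⟨a', b'⟩, ha', hb', hab'⟩ := h2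
  refine ⟨(a * a', b * b'), mul_ne_zero ha ha', mul_ne_zero hb hb', ?_⟩
  calc (a * a') • x = a' • (a • x) := by rw [smul_smul, mul_comm]
    _ = a' • (b • y) := by rw [hab]
    _ = b • (a' • y) := by rw [smul_smul, mul_comm, ← smul_smul]
    _ = b • (b' • z) := by rw [hab']
    _ = (b * b') • z := by rw [smul_smul]

end EgyRelLemmas

theorem field_iff' {A F : Type*} [CommRing A] [DecidableEq A] [Field F] (ψ : A →+* F) (r : A)
    (s : Finset A) (h : ∀ a ∈ s, ψ a ≠ 0) :
    ψ r = ∑ a ∈ s, (ψ a)⁻¹ ↔ ψ (r * ∏ a ∈ s, a) = ψ (∑ a ∈ s, ∏ b ∈ s.erase a, b) := by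
  have hP : ∏ a ∈ s, ψ a ≠ 0 := Finset.prod_ne_zero_iff.mpr h
  have hterm : ∀ a ∈ s, (ψ a)⁻¹ = (∏ b ∈ s.erase a, ψ b) / ∏ b ∈ s, ψ b := by
    intro a ha
    rw [eq_div_iff hP]
    rw [← Finset.mul_prod_erase s (fun b => ψ b) ha, ← mul_assoc,
      inv_mul_cancel₀ (h a ha), one_mul]
  rw [Finset.sum_congr rfl hterm, ← Finset.sum_div, map_mul, map_prod, map_sum, eq_div_iff hP]
  simp_rw [map_prod]

theorem transfer' {A : Type*} [CommRing A] [DecidableEq A] (r : A) (s : Finset A)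
    (h0 : ∀ a ∈ s, a ≠ 0)
    (F : Type*) [Field F] (ψ : A →+* F) (hψ : Function.Injective ψ)
    (hL : ψ r = ∑ a ∈ s, (ψ a)⁻¹) :
    ∀ (K : Type*) [Field K] (φ : A →+* K), Function.Injective φ → φ r = ∑ a ∈ s, (φ a)⁻¹ := by
  intro K _ φ hφ
  have hneF : ∀ a ∈ s, ψ a ≠ 0 := fun a ha hz => h0 a ha (hψ (hz.trans (map_zero ψ).symm))
  have hneK : ∀ a ∈ s, φ a ≠ 0 := fun a ha hz => h0 a ha (hφ (hz.trans (map_zero φ).symm))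
  have key : r * ∏ a ∈ s, a = ∑ a ∈ s, ∏ b ∈ s.erase a, b :=
    hψ ((field_iff' ψ r s hneF).mp hL)
  exact (field_iff' φ r s hneK).mpr (congrArg φ key)

theorem IsEgyptian.rep_any {D : Type*} [CommRing D] [IsDomain D] (hD : IsEgyptian D)
    (d : D) (hd : d ≠ 0) : ∃ s : Finset D, (∀ i ∈ s, i ≠ 0) ∧
      ∀ (K : Type*) [Field K] (φ : D →+* K), Function.Injective φ →
        φ d = ∑ i ∈ s, (φ i)⁻¹ := by
  classical
  obtain ⟨s, h0, hrep⟩ := hD d hd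
  refine ⟨s, h0, transfer' d s h0 (FractionRing D) (algebraMap D (FractionRing D))
    (IsFractionRing.injective D _) (hrep (FractionRing D) _ (IsFractionRing.injective D _))⟩

theorem main_ind (D : Type*) [CommRing D] [IsDomain D] (hD : IsEgyptian D)
    (L : Type u) [Field L] [Algebra D L] (hinj : Function.Injective (algebraMap D L))
    (A : Subalgebra D L) (T : Finset L) (hT : ∀ m ∈ T, m ≠ 0 ∧ m ∈ A ∧ m⁻¹ ∈ A) (c : L → D) :
    ∃ s : Finset L, (∀ z ∈ s, z ≠ 0 ∧ z ∈ A ∧ ∃ m ∈ T, EgyRel D z⁻¹ m) ∧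
      ∑ m ∈ T, (c m) • m = ∑ z ∈ s, z⁻¹ := by
  classical
  set φ := algebraMap D L with hφ
  have hφne : ∀ d : D, d ≠ 0 → φ d ≠ 0 := fun d hd hz => hd (hinj (hz.trans (map_zero φ).symm))
  induction T using Finset.strongInduction with
  | _ T ih =>
  rcases T.eq_empty_or_nonempty with rfl | ⟨m₀, hm₀⟩
  · exact ⟨∅, by simp, by simp⟩
  have hm₀0 : m₀ ≠ 0 := (hT m₀ hm₀).1
  set C := T.filter (fun m => EgyRel D m m₀) with hCdef
  set T' := T.filter (fun m => ¬ EgyRel D m m₀) with hT'def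
  have hT'sub : T' ⊆ T := Finset.filter_subset _ _
  have hT'ss : T' ⊂ T := by
    refine Finset.ssubset_iff_of_subset hT'sub |>.mpr ⟨m₀, hm₀, ?_⟩
    simp only [hT'def, Finset.mem_filter, not_and, not_not]
    exact fun _ => EgyRel.refl m₀
  obtain ⟨s', hs', hsum'⟩ := ih T' hT'ss (fun m hm => hT m (hT'sub hm))
  have hs'T : ∀ z ∈ s', z ≠ 0 ∧ z ∈ A ∧ ∃ m ∈ T, EgyRel D z⁻¹ m := by
    intro z hz
    obtain ⟨h1, h2, m, hm, h3⟩ := hs' z hz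
    exact ⟨h1, h2, m, hT'sub hm, h3⟩
  have hsplit : ∑ m ∈ T, (c m) • m = ∑ m ∈ C, (c m) • m + ∑ m ∈ T', (c m) • m :=
    (Finset.sum_filter_add_sum_filter_not T _ _).symm
  -- choice functions for the class C
  set a : L → D := fun m => if h : EgyRel D m m₀ then h.choose.1 else 1 with hadef
  set b : L → D := fun m => if h : EgyRel D m m₀ then h.choose.2 else 1 with hbdef
  have hab : ∀ m, (h : EgyRel D m m₀) → a m ≠ 0 ∧ b m ≠ 0 ∧ (a m) • m = (b m) • m₀ := by
    intro m h
    simp only [hadef, hbdef, dif_pos h]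
    exact h.choose_spec
  have haC : ∀ m ∈ C, a m ≠ 0 := fun m hm => (hab m (Finset.mem_filter.mp hm).2).1
  set Q : D := ∏ m ∈ C, a m with hQdef
  have hQ : Q ≠ 0 := Finset.prod_ne_zero_iff.mpr haC
  set N : D := ∑ m ∈ C, c m * b m * ∏ m' ∈ C.erase m, a m' with hNdef
  have hclass : ∑ m ∈ C, (c m) • m = φ N / φ Q * m₀ := by
    have hterm : ∀ m ∈ C, (c m) • m = φ (c m * b m * ∏ m' ∈ C.erase m, a m') / φ Q * m₀ := by
      intro m hm
      obtain ⟨ha1, hb1, habm⟩ := hab m (Finset.mem_filter.mp hm).2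
      have h1 : φ (a m) * m = φ (b m) * m₀ := by
        rw [← Algebra.smul_def, ← Algebra.smul_def]; exact habm
      have hQm : Q = a m * ∏ m' ∈ C.erase m, a m' := (Finset.mul_prod_erase C a hm).symm
      rw [Algebra.smul_def, div_mul_eq_mul_div, eq_div_iff (hφne Q hQ), hQm, map_mul, map_mul,
        map_mul]
      linear_combination (φ (c m) * φ (∏ m' ∈ C.erase m, a m')) * h1
    rw [Finset.sum_congr rfl hterm, hNdef, map_sum, Finset.sum_div, Finset.sum_mul]
  by_cases hN : N = 0
  · refine ⟨s', hs'T, ?_⟩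
    rw [hsplit, hclass, hN, map_zero, zero_div, zero_mul, zero_add, hsum']
  · obtain ⟨sN, hsN0, hsNrep⟩ := hD.rep_any N hN
    have hrepL : φ N = ∑ d ∈ sN, (φ d)⁻¹ := hsNrep L φ hinj
    set g : D → L := fun d => φ (d * Q) * m₀⁻¹ with hgdef
    have hginj : ∀ d₁ ∈ sN, ∀ d₂ ∈ sN, g d₁ = g d₂ → d₁ = d₂ := by
      intro d₁ _ d₂ _ h
      have h2 : φ (d₁ * Q) = φ (d₂ * Q) := mul_right_cancel₀ (inv_ne_zero hm₀0) h
      exact mul_right_cancel₀ hQ (hinj h2)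
    have hgne : ∀ d ∈ sN, g d ≠ 0 := fun d hd =>
      mul_ne_zero (hφne _ (mul_ne_zero (hsN0 d hd) hQ)) (inv_ne_zero hm₀0)
    have hclass2 : φ N / φ Q * m₀ = ∑ d ∈ sN, (g d)⁻¹ := by
      rw [hrepL, Finset.sum_div, Finset.sum_mul]
      refine Finset.sum_congr rfl fun d hd => ?_
      rw [hgdef]
      simp only [map_mul, mul_inv, inv_inv]
      field_simp
    set sC : Finset L := sN.image g with hsCdef
    have hsumC : ∑ z ∈ sC, z⁻¹ = ∑ d ∈ sN, (g d)⁻¹ := Finset.sum_image hginj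
    have hzrel : ∀ d ∈ sN, EgyRel D (g d)⁻¹ m₀ := by
      intro d hd
      refine ⟨(d * Q, 1), mul_ne_zero (hsN0 d hd) hQ, one_ne_zero, ?_⟩
      rw [one_smul, Algebra.smul_def, hgdef]
      simp only [mul_inv, inv_inv]
      rw [← mul_assoc, mul_inv_cancel₀ (hφne _ (mul_ne_zero (hsN0 d hd) hQ)), one_mul]
    have hdisj : Disjoint sC s' := by
      rw [Finset.disjoint_left]
      intro z hzC hzs'
      obtain ⟨d, hd, rfl⟩ := Finset.mem_image.mp hzC
      obtain ⟨_, _, m, hm, hrel⟩ := hs' _ hzs'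
      exact (Finset.mem_filter.mp hm).2 (hrel.symm.trans (hzrel d hd))
    refine ⟨sC ∪ s', ?_, ?_⟩
    · intro z hz
      rcases Finset.mem_union.mp hz with hz | hz
      · obtain ⟨d, hd, rfl⟩ := Finset.mem_image.mp hz
        refine ⟨hgne d hd, ?_, m₀, hm₀, hzrel d hd⟩
        exact mul_mem (A.algebraMap_mem _) (hT m₀ hm₀).2.2
      · exact hs'T z hz
    · rw [Finset.sum_union hdisj, hsplit, hsum', hclass, hclass2, hsumC]

/-- Let `D` be an Egyptian domain, `L` a field extension of the fraction field of `D`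
(i.e. a field in which `D` embeds), and `R = D[u₁, …, u_t] ⊆ L` the `D`-subalgebra of `L`
generated by nonzero elements `u₁, …, u_t`, and let `u = u₁ ⋯ u_t`.  Then
`R_u = R[1/u] = D[u₁, …, u_t, u⁻¹] ⊆ L` is Egyptian. -/
theorem statement8 (D : Type*) [CommRing D] [IsDomain D] (hD : IsEgyptian D)
    (L : Type u) [Field L] [Algebra D L]
    (hinj : Function.Injective (algebraMap D L))
    (t : ℕ) (u : Fin t → L) (hu : ∀ i, u i ≠ 0) :
    IsEgyptian ↥(Algebra.adjoin D (Set.range u ∪ {(∏ i, u i)⁻¹})) := by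
  classical
  set v : L := (∏ i, u i)⁻¹ with hv
  set A := Algebra.adjoin D (Set.range u ∪ {v}) with hA
  intro r hr
  have hprodne : (∏ i, u i) ≠ 0 := Finset.prod_ne_zero_iff.mpr (fun i _ => hu i)
  have hvne : v ≠ 0 := inv_ne_zero hprodne
  have huA : ∀ i, u i ∈ A := fun i => Algebra.subset_adjoin (Or.inl ⟨i, rfl⟩)
  have hvA : v ∈ A := Algebra.subset_adjoin (Or.inr rfl)
  set M : Submonoid L :=
    { carrier := {x | x ≠ 0 ∧ x ∈ A ∧ x⁻¹ ∈ A}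
      mul_mem' := by
        rintro x y ⟨hx0, hxA, hxI⟩ ⟨hy0, hyA, hyI⟩
        exact ⟨mul_ne_zero hx0 hy0, mul_mem hxA hyA, by rw [mul_inv]; exact mul_mem hxI hyI⟩
      one_mem' := ⟨one_ne_zero, one_mem A, by rw [inv_one]; exact one_mem A⟩ } with hM
  have hgen : Set.range u ∪ {v} ⊆ (M : Set L) := by
    rintro x (⟨i, rfl⟩ | hx)
    · refine ⟨hu i, huA i, ?_⟩
      have h1 : (u i)⁻¹ = (∏ j ∈ Finset.univ.erase i, u j) * v := by
        rw [hv, ← Finset.mul_prod_erase Finset.univ u (Finset.mem_univ i), mul_inv]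
        rw [← mul_assoc, mul_comm (∏ j ∈ Finset.univ.erase i, u j) (u i)⁻¹, mul_assoc,
          mul_inv_cancel₀ (Finset.prod_ne_zero_iff.mpr (fun j _ => hu j)), mul_one]
      rw [h1]
      exact mul_mem (prod_mem fun j _ => huA j) hvA
    · rcases Set.mem_singleton_iff.mp hx with rfl
      exact ⟨hvne, hvA, by rw [hv, inv_inv]; exact prod_mem fun j _ => huA j⟩
  have hclosure : Submonoid.closure (Set.range u ∪ {v}) ≤ M := Submonoid.closure_le.mpr hgen
  have hmem : (r : L) ∈ Submodule.span D
      ((Submonoid.closure (Set.range u ∪ {v}) : Submonoid L) : Set L) := by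
    have h3 : (r : L) ∈ Subalgebra.toSubmodule (Algebra.adjoin D (Set.range u ∪ {v})) := r.2
    rwa [Algebra.adjoin_eq_span] at h3
  obtain ⟨cf, hsupp, hsum⟩ := Submodule.mem_span_set.mp hmem
  have hmono : ∀ m ∈ cf.support, m ≠ 0 ∧ m ∈ A ∧ m⁻¹ ∈ A := fun m hm => hclosure (hsupp hm)
  obtain ⟨s, hs, heq⟩ := main_ind D hD L hinj A cf.support hmono cf
  set f : {z // z ∈ s} → ↥A := fun z => (⟨z.1, (hs z.1 z.2).2.1⟩ : ↥A) with hf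
  set sA : Finset ↥A := s.attach.image f with hsA
  have hfinj : ∀ z₁ ∈ s.attach, ∀ z₂ ∈ s.attach, f z₁ = f z₂ → z₁ = z₂ := by
    intro z₁ _ z₂ _ h
    exact Subtype.ext (congrArg Subtype.val h : (f z₁).1 = (f z₂).1)
  have hLrep : (Subalgebra.val A).toRingHom r = ∑ i ∈ sA, ((Subalgebra.val A).toRingHom i)⁻¹ := by
    have h4 : ∀ i : ↥A, (Subalgebra.val A).toRingHom i = (i : L) := fun i => rfl
    rw [h4, hsA, Finset.sum_image hfinj]
    simp only [h4, hf]
    rw [Finset.sum_attach s (fun z => z⁻¹), ← heq]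
    rw [Finsupp.sum] at hsum
    exact hsum.symm
  refine ⟨sA, ?_, ?_⟩
  · intro i hi
    obtain ⟨z, hz, rfl⟩ := Finset.mem_image.mp hi
    intro h
    exact (hs z.1 z.2).1 (congrArg Subtype.val h)
  · intro K _ φ hφ
    exact transfer' r sA (by
      intro i hi
      obtain ⟨z, hz, rfl⟩ := Finset.mem_image.mp hi
      intro h
      exact (hs z.1 z.2).1 (congrArg Subtype.val h)) L (Subalgebra.val A).toRingHom
      Subtype.val_injective hLrep K φ hφ
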